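/- Let T be a finite tree with at least one edge and M ⊆ V(T). Suppose that for every edge e = {u, v} of T, the subdivided tree T_e (with new unmonitored vertex w) satisfies: every vertex of degree greater than 1 has at most one unmonitored neighbor and every unmonitored leaf is adjacent to a monitored vertex. Then M is a vertex cover of T (every edge has at least one monitored endpoint) and every leaf of T belongs to M. -/

import Mathlib

open SimpleGraph

/-- The tree `T` with the edge `{u,v}` subdivided by a new vertex `Sum.inr ()`. -/
def subdiv {V : Type*} (T : SimpleGraph V) (u v : V) : SimpleGraph (V ⊕ Unit) where
  Adj a b :=
    match a, b with
    | Sum.inl a, Sum.inl b => T.Adj a b ∧ ¬((a = u ∧ b = v) ∨ (a = v ∧ b = u))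
    | Sum.inl a, Sum.inr _ => a = u ∨ a = v
    | Sum.inr _, Sum.inl b => b = u ∨ b = v
    | Sum.inr _, Sum.inr _ => False
  symm := by
    constructor
    rintro (a | a) (b | b) h
    · exact ⟨h.1.symm, fun hc =>
        h.2 (hc.elim (fun h' => Or.inr ⟨h'.2, h'.1⟩) (fun h' => Or.inl ⟨h'.2, h'.1⟩))⟩
    · exact h
    · exact h
    · exact h
  loopless := by
    constructor
    rintro (a | a) h
    · exact T.loopless.irrefl a h.1
    · exact h

/-- Observability conditions of Lemma 1: every vertex of degree `> 1` has at most one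
unmonitored neighbor, and every unmonitored leaf is adjacent to a monitored vertex. -/
def obsCond {W : Type*} (G : SimpleGraph W) (M : Set W) : Prop :=
  (∀ x, 1 < (G.neighborSet x).ncard → {y | G.Adj x y ∧ y ∉ M}.Subsingleton) ∧
  (∀ x, (G.neighborSet x).ncard = 1 → x ∉ M → ∃ y, G.Adj x y ∧ y ∈ M)

/-! The subdivision vertex `w` of an edge `{u, v}` has exactly the two neighbours `u` and `v`, so
the first condition forbids both being unmonitored. If `u` is a leaf of `T` with neighbour `v`,
then in `T_{uv}` the leaf `u` is adjacent only to the unmonitored `w`, so the second condition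
forces `u` to be monitored. -/

namespace subdiv

variable {V : Type*} {T : SimpleGraph V} {u v : V}

theorem neighborSet_inr : (subdiv T u v).neighborSet (Sum.inr ()) = {Sum.inl u, Sum.inl v} := by
  ext (c | c) <;> simp [SimpleGraph.neighborSet, subdiv]

theorem neighborSet_inl_of_neighborSet_eq (hu : T.neighborSet u = {v}) :
    (subdiv T u v).neighborSet (Sum.inl u) = {Sum.inr ()} := by
  ext (c | c)
  · simp only [mem_neighborSet, Set.mem_singleton_iff, reduceCtorEq, iff_false]
    rintro ⟨hadj, hne⟩
    have hc : c ∈ T.neighborSet u := hadj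
    rw [hu] at hc
    exact hne (Or.inl ⟨rfl, hc⟩)
  · simp [SimpleGraph.neighborSet, subdiv]

theorem mem_or_mem_of_obsCond {M : Set V} (huv : T.Adj u v)
    (hobs : obsCond (subdiv T u v) (Sum.inl '' M)) : u ∈ M ∨ v ∈ M := by
  by_contra! hM
  have hdeg : 1 < ((subdiv T u v).neighborSet (Sum.inr ())).ncard := by
    rw [neighborSet_inr, Set.ncard_pair (by simp [huv.ne])]
    norm_num
  have hu : Sum.inl u ∈ {y | (subdiv T u v).Adj (Sum.inr ()) y ∧ y ∉ Sum.inl '' M} :=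
    ⟨Or.inl rfl, by simp [hM.1]⟩
  have hv : Sum.inl v ∈ {y | (subdiv T u v).Adj (Sum.inr ()) y ∧ y ∉ Sum.inl '' M} :=
    ⟨Or.inr rfl, by simp [hM.2]⟩
  have hsame : (Sum.inl u : V ⊕ Unit) = Sum.inl v := hobs.1 _ hdeg hu hv
  exact huv.ne (Sum.inl_injective hsame)

theorem mem_of_obsCond_of_neighborSet_eq {M : Set V} (hu : T.neighborSet u = {v})
    (hobs : obsCond (subdiv T u v) (Sum.inl '' M)) : u ∈ M := by
  by_contra huM
  have hleaf := neighborSet_inl_of_neighborSet_eq hu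
  obtain ⟨y, hy, hyM⟩ := hobs.2 (Sum.inl u) (by simp [hleaf]) (by simp [huM])
  have hy' : y ∈ (subdiv T u v).neighborSet (Sum.inl u) := hy
  rw [hleaf, Set.mem_singleton_iff] at hy'
  simp [hy'] at hyM

end subdiv

theorem stmt2_general {V : Type*} (T : SimpleGraph V) (M : Set V)
    (hobs : ∀ u v, T.Adj u v → obsCond (subdiv T u v) (Sum.inl '' M)) :
    (∀ a b, T.Adj a b → a ∈ M ∨ b ∈ M) ∧
    (∀ a, (T.neighborSet a).ncard = 1 → a ∈ M) := by
  refine ⟨fun a b hab => subdiv.mem_or_mem_of_obsCond hab (hobs a b hab), fun a ha => ?_⟩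
  obtain ⟨b, hb⟩ := Set.ncard_eq_one.mp ha
  have hab : T.Adj a b := by simp [← mem_neighborSet, hb]
  exact subdiv.mem_of_obsCond_of_neighborSet_eq hb (hobs a b hab)

/-- necessity direction of Theorem 1: if every edge-subdivided tree `T_e`
satisfies the observability conditions, then `M` is a vertex cover of `T` and contains
all its leaves. -/
theorem stmt2 {V : Type*} [Finite V] (T : SimpleGraph V) (hT : T.IsTree) (M : Set V)
    (hedge : ∃ a b, T.Adj a b)
    (hobs : ∀ u v, T.Adj u v → obsCond (subdiv T u v) (Sum.inl '' M)) :
    (∀ a b, T.Adj a b → a ∈ M ∨ b ∈ M) ∧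
    (∀ a, (T.neighborSet a).ncard = 1 → a ∈ M) :=
  stmt2_general T M hobs
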